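/- There exists w₃ > 0 such that the four points (cos(2πk/3), sin(2πk/3), 0) for k = 0, 1, 2 (the vertices of the standard equilateral triangle inscribed in the unit circle of the plane {x₃ = 0}) together with (0, 0, w₃) form an equilateral set in (ℍ¹, d_H), i.e. all six pairwise Korányi distances are equal. -/
import Mathlib


open MeasureTheory Set ENNReal Real

noncomputable section

/-- The first Heisenberg group `ℍ¹`, identified with `ℝ³`. -/
abbrev H1 := ℝ × ℝ × ℝ

/-- The group law of `ℍ¹`:
`x·y = (x₁+y₁, x₂+y₂, x₃+y₃ - 2(x₁y₂ - x₂y₁))`. -/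
def hmul1 (x y : H1) : H1 :=
  (x.1 + y.1, x.2.1 + y.2.1, x.2.2 + y.2.2 - 2 * (x.1 * y.2.1 - x.2.1 * y.1))

/-- The group inverse of `ℍ¹`, `x⁻¹ = -x`. -/
def hinv1 (x : H1) : H1 := (-x.1, -x.2.1, -x.2.2)

/-- The Korányi norm `‖x‖_H = ((x₁²+x₂²)² + x₃²)^{1/4}`. -/
def KNorm1 (x : H1) : ℝ := ((x.1 ^ 2 + x.2.1 ^ 2) ^ 2 + x.2.2 ^ 2) ^ ((1 : ℝ) / 4)

/-- The Korányi metric `d_H(x,y) = ‖x⁻¹·y‖_H` on `ℍ¹`. -/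
def dH1 (x y : H1) : ℝ := KNorm1 (hmul1 (hinv1 x) y)

/-- The closed `d_H`-ball of center `x` and radius `r`. -/
def ball1 (x : H1) (r : ℝ) : Set H1 := {y | dH1 x y ≤ r}

/-- The vertices of the standard equilateral triangle inscribed in the unit circle of the
plane `{x₃ = 0}` in `ℍ¹`. -/
def triVert (k : ℕ) : H1 :=
  (Real.cos (2 * Real.pi * k / 3), Real.sin (2 * Real.pi * k / 3), 0)

/-- There exists `w₃ > 0` such that the three vertices of the standard equilateral triangle
in the plane `{x₃ = 0}` together with `(0,0,w₃)` form an equilateral set in `(ℍ¹, d_H)`: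
all six pairwise Korányi distances are equal. -/
theorem statement17 :
    ∃ w₃ : ℝ, 0 < w₃ ∧
      dH1 (triVert 0) (triVert 1) = dH1 (triVert 0) (triVert 2) ∧
      dH1 (triVert 0) (triVert 1) = dH1 (triVert 1) (triVert 2) ∧
      dH1 (triVert 0) (triVert 1) = dH1 (triVert 0) (0, 0, w₃) ∧
      dH1 (triVert 0) (triVert 1) = dH1 (triVert 1) (0, 0, w₃) ∧
      dH1 (triVert 0) (triVert 1) = dH1 (triVert 2) (0, 0, w₃) := by
  have h3 : Real.sqrt 3 ^ 2 = 3 := Real.sq_sqrt (by norm_num)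
  have h11 : Real.sqrt 11 ^ 2 = 11 := Real.sq_sqrt (by norm_num)
  have t0 : triVert 0 = (1, 0, 0) := by simp [triVert]
  have t1 : triVert 1 = (-(1 / 2), Real.sqrt 3 / 2, 0) := by
    simp only [triVert, Nat.cast_one]
    rw [show (2 * Real.pi * 1 / 3 : ℝ) = Real.pi - Real.pi / 3 by ring,
      Real.cos_pi_sub, Real.sin_pi_sub, Real.cos_pi_div_three, Real.sin_pi_div_three]
  have t2 : triVert 2 = (-(1 / 2), -(Real.sqrt 3 / 2), 0) := by
    simp only [triVert, Nat.cast_ofNat]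
    rw [show (2 * Real.pi * 2 / 3 : ℝ) = Real.pi + Real.pi / 3 by ring,
      Real.cos_add, Real.sin_add, Real.cos_pi, Real.sin_pi,
      Real.cos_pi_div_three, Real.sin_pi_div_three]
    norm_num
  refine ⟨Real.sqrt 11, Real.sqrt_pos.mpr (by norm_num), ?_, ?_, ?_, ?_, ?_⟩ <;>
    simp only [t0, t1, t2, dH1, KNorm1, hmul1, hinv1] <;>
    norm_num <;> congr 1 <;> nlinarith [h3, h11]
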